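/- For the map τ on [0,1] given by τ(x) = 2x/(1−x) for 0 ≤ x ≤ 1/3 and τ(x) = (1−x)/(2x) for 1/3 < x ≤ 1, the function f*(x) = 2/(1+x)² is an invariant density: f* ≥ 0, ∫₀¹ f* dλ = 1, and (𝓛_τ f*)(x) = f*(x) for all x, where 𝓛_τ is the transfer operator of τ. -/

import Mathlib

/-!
Each branch of the transfer operator contributes exactly half of `f*(x) = 2/(1+x)²`:
since `1 + y₁ = 2(1+x)/(x+2)`, `1 - y₁ = 2/(x+2)` and `1 + y₂ = 2(1+x)/(1+2x)`, both
`f*(y₁)·(1-y₁)²/2` and `f*(y₂)·2y₂²` equal `1/(1+x)²`. The mass of `f*` on `[0,1]` is read off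
the antiderivative `-2/(1+x)`.
-/

/-- The eventually expanding Markov map `τ(x) = 2x/(1−x)` on `[0,1/3]` and
`τ(x) = (1−x)/(2x)` on `(1/3,1]`. -/
noncomputable def tauMap (x : ℝ) : ℝ :=
  if x ≤ 1 / 3 then 2 * x / (1 - x) else (1 - x) / (2 * x)

/-- The transfer operator of `tauMap`, written via its two inverse branches
`y₁(x) = x/(x+2)` and `y₂(x) = 1/(1+2x)` with derivative factors
`1/|τ'(y₁)| = (1−y₁)²/2` and `1/|τ'(y₂)| = 2 y₂²`. -/
noncomputable def transferTau (f : ℝ → ℝ) (x : ℝ) : ℝ :=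
  f (x / (x + 2)) * ((1 - x / (x + 2)) ^ 2 / 2)
    + f (1 / (1 + 2 * x)) * (2 * (1 / (1 + 2 * x)) ^ 2)

theorem tauMap_div_add_two {x : ℝ} (hx₀ : -2 < x) (hx₁ : x ≤ 1) :
    tauMap (x / (x + 2)) = x := by
  have h₂ : 0 < x + 2 := by linarith
  have hle : x / (x + 2) ≤ 1 / 3 := by
    rw [div_le_div_iff₀ h₂ three_pos]; linarith
  have hsub : 1 - x / (x + 2) = 2 / (x + 2) := by field_simp; ring
  rw [tauMap, if_pos hle, hsub]
  field_simp

theorem tauMap_one_div_one_add_two_mul {x : ℝ} (hx₀ : -1 / 2 < x) (hx₁ : x ≤ 1) :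
    tauMap (1 / (1 + 2 * x)) = x := by
  have h₁₂ : 0 < 1 + 2 * x := by linarith
  rcases hx₁.lt_or_eq with hlt | rfl
  · have hgt : ¬ 1 / (1 + 2 * x) ≤ 1 / 3 := by
      rw [not_le, div_lt_div_iff₀ three_pos h₁₂]; linarith
    rw [tauMap, if_neg hgt]
    field_simp
    ring
  · norm_num [tauMap]

theorem integral_two_div_one_add_sq {a b : ℝ} (ha : -1 < a) (hb : -1 < b) :
    ∫ x in a..b, 2 / (1 + x) ^ 2 = 2 / (1 + a) - 2 / (1 + b) := by
  have hpos : ∀ x ∈ Set.uIcc a b, 0 < 1 + x := fun x hx => by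
    rcases Set.mem_uIcc.mp hx with h | h <;> linarith [h.1]
  have hderiv : ∀ x ∈ Set.uIcc a b,
      HasDerivAt (fun y => -2 / (1 + y)) (2 / (1 + x) ^ 2) x := fun x hx => by
    have h := (hasDerivAt_const x (-2 : ℝ)).div ((hasDerivAt_id x).const_add 1) (hpos x hx).ne'
    exact h.congr_deriv (by simp)
  rw [intervalIntegral.integral_eq_sub_of_hasDerivAt hderiv]
  · ring
  · exact (continuousOn_const.div (by fun_prop)
      fun x hx => (pow_pos (hpos x hx) 2).ne').intervalIntegrable

theorem transferTau_two_div_one_add_sq {x : ℝ} (hx : -1 / 2 < x) :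
    transferTau (fun y => 2 / (1 + y) ^ 2) x = 2 / (1 + x) ^ 2 := by
  have h₂ : x + 2 ≠ 0 := by linarith
  have h₁₂ : 1 + 2 * x ≠ 0 := by linarith
  have h₁ : 1 + x ≠ 0 := by linarith
  have hleft : 2 / (1 + x / (x + 2)) ^ 2 * ((1 - x / (x + 2)) ^ 2 / 2) = 1 / (1 + x) ^ 2 := by
    rw [show 1 + x / (x + 2) = 2 * (1 + x) / (x + 2) by field_simp; ring,
      show 1 - x / (x + 2) = 2 / (x + 2) by field_simp; ring]
    field_simp
  have hright : 2 / (1 + 1 / (1 + 2 * x)) ^ 2 * (2 * (1 / (1 + 2 * x)) ^ 2) =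
      1 / (1 + x) ^ 2 := by
    rw [show 1 + 1 / (1 + 2 * x) = 2 * (1 + x) / (1 + 2 * x) by field_simp; ring]
    field_simp
  rw [transferTau, hleft, hright]
  ring

/-- `f*(x) = 2/(1+x)²` is an invariant density for `tauMap`:
the inverse branches are genuine preimages, `f* ≥ 0`, `∫₀¹ f* = 1`, and
`𝓛_τ f* = f*` pointwise on `[0,1]`. -/
theorem stmt_19 :
    (∀ x ∈ Set.Icc (0:ℝ) 1,
        tauMap (x / (x + 2)) = x ∧ tauMap (1 / (1 + 2 * x)) = x) ∧
    (∀ x ∈ Set.Icc (0:ℝ) 1, 0 ≤ 2 / (1 + x) ^ 2) ∧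
    (∫ x in (0:ℝ)..1, 2 / (1 + x) ^ 2) = 1 ∧
    (∀ x ∈ Set.Icc (0:ℝ) 1,
      transferTau (fun y => 2 / (1 + y) ^ 2) x = 2 / (1 + x) ^ 2) := by
  refine ⟨fun x hx => ⟨?_, ?_⟩, fun x _ => by positivity, ?_,
    fun x hx => transferTau_two_div_one_add_sq (by linarith [hx.1])⟩
  · exact tauMap_div_add_two (by linarith [hx.1]) hx.2
  · exact tauMap_one_div_one_add_two_mul (by linarith [hx.1]) hx.2
  · rw [integral_two_div_one_add_sq (by norm_num) (by norm_num)]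
    norm_num
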